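/- Let F, G : Type u ⥤ Type u be functors that preserve filtered colimits. Then restriction along the inclusion of finite types is fully faithful on such functors: the map sending a natural transformation η : F ⟶ G to its whiskering FintypeCat.incl ◁ η : (FintypeCat.incl ⋙ F) ⟶ (FintypeCat.incl ⋙ G) is a bijection. -/

import Mathlib

/-!
Every type `X` is the filtered colimit of its finite subsets, and these are final among all maps
from finite types to `X`: a map from a finite type factors through its (finite) image, and
uniquely through any finite subset containing that image. A functor `F` preserving filtered
colimits therefore sends this colimit to a colimit, i.e. `F` is the pointwise left Kan extension
of `FintypeCat.incl ⋙ F` along `FintypeCat.incl`, and the bijection is the universal property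
of this Kan extension.
-/

open CategoryTheory CategoryTheory.Limits

universe u

namespace FintypeCat

instance (X : Type u) : IsFiltered (HasCardinalLT.Set X Cardinal.aleph0) :=
  HasCardinalLT.Set.isFiltered_of_aleph0_le X _ le_rfl

instance (X : Type u) (A : HasCardinalLT.Set X Cardinal.aleph0) : Finite A.1 :=
  (hasCardinalLT_aleph0_iff _).1 A.2

def finiteSubsetsToCostructuredArrow (X : Type u) :
    HasCardinalLT.Set X Cardinal.aleph0 ⥤ CostructuredArrow incl X where
  obj A := CostructuredArrow.mk (Y := FintypeCat.of A.1) ((HasCardinalLT.Set.cocone X _).ι.app A)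
  map h := CostructuredArrow.homMk (homMk ((HasCardinalLT.Set.functor X _).map h)) rfl

instance (X : Type u) : (finiteSubsetsToCostructuredArrow X).Final := by
  refine Functor.final_of_exists_of_isFiltered _ (fun f => ?_) (fun {f A} s s' => ⟨A, 𝟙 A, ?_⟩)
  · refine ⟨⟨Set.range f.hom, (hasCardinalLT_aleph0_iff _).2 (Set.finite_range (ι := f.left) _)⟩,
      ⟨CostructuredArrow.homMk (homMk fun a => ⟨f.hom a, a, rfl⟩) rfl⟩⟩
  · have hs := CostructuredArrow.w s
    have hs' := CostructuredArrow.w s'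
    rw [CategoryTheory.Functor.map_id, Category.comp_id, Category.comp_id]
    ext a
    have hsa := ConcreteCategory.congr_hom (hs.trans hs'.symm) a
    exact Subtype.ext hsa

variable {E : Type*} [Category.{u} E]

noncomputable def isPointwiseLeftKanExtensionOfPreservesFilteredColimits (F : Type u ⥤ E)
    [PreservesFilteredColimits F] :
    (Functor.LeftExtension.mk F (𝟙 (incl ⋙ F))).IsPointwiseLeftKanExtension := fun X =>
  (Functor.Final.isColimitWhiskerEquiv (finiteSubsetsToCostructuredArrow X) _).1
    (IsColimit.ofIsoColimit (isColimitOfPreserves F (HasCardinalLT.Set.isColimitCocone X _ le_rfl))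
      (Cocone.ext (Iso.refl _) fun _ => (Category.comp_id _).trans (Category.id_comp _).symm))

instance isLeftKanExtension_of_preservesFilteredColimits (F : Type u ⥤ E)
    [PreservesFilteredColimits F] : F.IsLeftKanExtension (𝟙 (incl ⋙ F)) :=
  (isPointwiseLeftKanExtensionOfPreservesFilteredColimits F).isLeftKanExtension

end FintypeCat

theorem whiskerLeft_incl_bijective_general
    (F G : Type u ⥤ Type u) [PreservesFilteredColimits F] :
    Function.Bijective
      (fun η : F ⟶ G =>
        (Functor.whiskerLeft FintypeCat.incl η : FintypeCat.incl ⋙ F ⟶ FintypeCat.incl ⋙ G)) := by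
  convert (F.homEquivOfIsLeftKanExtension (𝟙 (FintypeCat.incl ⋙ F)) G).bijective using 2 with η
  exact (Category.id_comp _).symm

/-- For endofunctors `F G` of `Type u` preserving filtered colimits, restriction along the
inclusion of finite types is fully faithful: whiskering natural transformations with
`FintypeCat.incl` is a bijection
`(F ⟶ G) ≃ (FintypeCat.incl ⋙ F ⟶ FintypeCat.incl ⋙ G)`. -/
theorem whiskerLeft_incl_bijective
    (F G : Type u ⥤ Type u) [PreservesFilteredColimits F] [PreservesFilteredColimits G] :
    Function.Bijective
      (fun η : F ⟶ G =>
        (Functor.whiskerLeft FintypeCat.incl η : FintypeCat.incl ⋙ F ⟶ FintypeCat.incl ⋙ G)) :=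
  whiskerLeft_incl_bijective_general F G
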